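/- For every t ∈ ℂ with t ≠ 0, t ≠ 1 and t ≠ 81, setting λ = (t−81)/(8t) one has (35t⁴ − 3680t³ + 244242t² − 244944t + 177147)/(36·(t−81)²·(t−1)²·t²) = (81/(8t²))²·3·(25 − 210λ + 2179λ² + 216λ³ + 16λ⁴)/((1−8λ)²·λ²·(10+λ)²). -/

import Mathlib

/-!
The Möbius map `λ = (t - 81) / (8 t)` sends the singular points `λ = 1/8, 0, -10, ∞` of the
twist family to `t = ∞, 81, 1, 0`: the factors of the right-hand denominator become
`1 - 8λ = 81 / t`, `λ = (t - 81) / (8 t)` and `10 + λ = 81 (t - 1) / (8 t)`, while the quartic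
numerator pulls back to `243 / (256 t⁴)` times the quartic on the left. After these
substitutions both sides are the same rational function of `t`.
-/

section MobiusPullback

variable {K : Type*} [Field K] [CharZero K] {t l : K}

lemma one_sub_eight_mul_mobius (ht : t ≠ 0) (hl : l = (t - 81) / (8 * t)) :
    1 - 8 * l = 81 / t := by
  subst hl
  field_simp
  ring

lemma ten_add_mobius (ht : t ≠ 0) (hl : l = (t - 81) / (8 * t)) :
    10 + l = 81 * (t - 1) / (8 * t) := by
  subst hl
  field_simp
  ring

lemma quartic_mobius (ht : t ≠ 0) (hl : l = (t - 81) / (8 * t)) :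
    25 - 210 * l + 2179 * l ^ 2 + 216 * l ^ 3 + 16 * l ^ 4
      = 243 * (35 * t ^ 4 - 3680 * t ^ 3 + 244242 * t ^ 2 - 244944 * t + 177147)
          / (256 * t ^ 4) := by
  subst hl
  field_simp
  ring

end MobiusPullback

theorem sigma_match_no3 (t : ℂ) (h0 : t ≠ 0)
    (l : ℂ) (hl : l = (t - 81) / (8 * t)) :
    (35 * t ^ 4 - 3680 * t ^ 3 + 244242 * t ^ 2 - 244944 * t + 177147)
        / (36 * (t - 81) ^ 2 * (t - 1) ^ 2 * t ^ 2)
      = (81 / (8 * t ^ 2)) ^ 2 * 3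
          * (25 - 210 * l + 2179 * l ^ 2 + 216 * l ^ 3 + 16 * l ^ 4)
        / ((1 - 8 * l) ^ 2 * l ^ 2 * (10 + l) ^ 2) := by
  rw [quartic_mobius h0 hl, one_sub_eight_mul_mobius h0 hl, ten_add_mobius h0 hl, hl]
  field_simp
  ring
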